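/- arXiv:0902.2444 — 3 statements merged into one kernel-verified Lean document; each statement's English description precedes it below -/
import Mathlib

section
/- Let G₁, G₂ be graphs with n₁, n₂ vertices respectively, and let G be a t-connected sum of G₁ and G₂. Then for every k, b_k(G) = Σ_{i=0}^{k} [b_i(G₁)·C(n₂−t, k−i) + b_i(G₂)·C(n₁−t, k−i)] + C(n₁+n₂−2t, k), where b_k(H) = Σ_{|W|=k} (c(H|_W) − 1) and b_0(H) = −1. -/
open Finset

/-- Number of connected components of the induced subgraph on `W`, summed over all
`k`-subsets, each minus 1: the `k`-th special graded Betti number of a graph. -/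
noncomputable def graphB {V : Type} [Fintype V] [DecidableEq V] (k : ℕ) (G : SimpleGraph V) : ℤ :=
  ∑ W ∈ Finset.powersetCard k (Finset.univ : Finset V),
    ((Nat.card (G.induce (W : Set V)).ConnectedComponent : ℤ) - 1)

/-- `c_k(G)`: total number of connected components over all `k`-subsets. -/
noncomputable def graphC {V : Type} [Fintype V] [DecidableEq V] (k : ℕ) (G : SimpleGraph V) : ℕ :=
  ∑ W ∈ Finset.powersetCard k (Finset.univ : Finset V),
    Nat.card (G.induce (W : Set V)).ConnectedComponent

/-- `G` is a `t`-connected sum of `G₁` and `G₂`. -/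
def IsConnSum {V₁ V₂ V : Type} (t : ℕ) (G₁ : SimpleGraph V₁) (G₂ : SimpleGraph V₂)
    (G : SimpleGraph V) : Prop :=
  ∃ (f₁ : V₁ ↪ V) (f₂ : V₂ ↪ V) (F₁ : Set V₁) (F₂ : Set V₂),
    Nat.card F₁ = t ∧ Nat.card F₂ = t ∧
    (∀ x ∈ F₁, ∀ y ∈ F₁, x ≠ y → G₁.Adj x y) ∧
    (∀ x ∈ F₂, ∀ y ∈ F₂, x ≠ y → G₂.Adj x y) ∧
    Set.range f₁ ∪ Set.range f₂ = Set.univ ∧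
    Set.range f₁ ∩ Set.range f₂ = f₁ '' F₁ ∧
    f₁ '' F₁ = f₂ '' F₂ ∧
    (∀ a b, G.Adj a b ↔
      ((∃ x y, G₁.Adj x y ∧ f₁ x = a ∧ f₁ y = b) ∨
       (∃ x y, G₂.Adj x y ∧ f₂ x = a ∧ f₂ y = b)))

/-- Iterated `t`-connected sums of a list of graphs. -/
inductive IsIterConnSum (t : ℕ) :
    List ((W : Type) × SimpleGraph W) → ((W : Type) × SimpleGraph W) → Prop
  | single (p : (W : Type) × SimpleGraph W) : IsIterConnSum t [p] p
  | cons {l : List ((W : Type) × SimpleGraph W)} {p q r : (W : Type) × SimpleGraph W} :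
      IsIterConnSum t l p → IsConnSum t p.2 q.2 r.2 → IsIterConnSum t (l ++ [q]) r

/-- An abstract simplicial complex on the finite vertex set `V`. -/
structure SimpComplex (V : Type) [DecidableEq V] where
  faces : Finset (Finset V)
  singleton_mem : ∀ v : V, {v} ∈ faces
  down_closed : ∀ F ∈ faces, ∀ F', F' ⊆ F → F' ∈ faces

/-- The 1-skeleton of a simplicial complex. -/
def SimpComplex.skeleton {V : Type} [DecidableEq V] (Δ : SimpComplex V) : SimpleGraph V where
  Adj x y := x ≠ y ∧ ({x, y} : Finset V) ∈ Δ.faces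
  symm := by
    constructor
    intro x y h
    exact ⟨h.1.symm, by rw [Finset.pair_comm]; exact h.2⟩
  loopless := by constructor; intro x h; exact h.1 rfl

/-- The graph of the restricted complex `Δ_W = {F ∩ W : F ∈ Δ}` on the vertex set `W`:
two vertices are connected iff they form a face of `Δ_W`. -/
def SimpComplex.restrictGraph {V : Type} [DecidableEq V] (Δ : SimpComplex V) (W : Finset V) :
    SimpleGraph (W : Set V) :=
  SimpleGraph.fromRel (fun x y => ∃ F ∈ Δ.faces, F ∩ W = {(x : V), (y : V)})

/-- The `k`-th special graded Betti number of a simplicial complex. -/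
noncomputable def complexB {V : Type} [Fintype V] [DecidableEq V] (k : ℕ)
    (Δ : SimpComplex V) : ℤ :=
  ∑ W ∈ Finset.powersetCard k (Finset.univ : Finset V),
    ((Nat.card (Δ.restrictGraph W).ConnectedComponent : ℤ) - 1)

/-- `Δ` is a `t`-connected sum of the simplicial complexes `Δ₁` and `Δ₂`. -/
def IsConnSumC {V₁ V₂ V : Type} [DecidableEq V₁] [DecidableEq V₂] [DecidableEq V] (t : ℕ)
    (Δ₁ : SimpComplex V₁) (Δ₂ : SimpComplex V₂) (Δ : SimpComplex V) : Prop :=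
  ∃ (f₁ : V₁ ↪ V) (f₂ : V₂ ↪ V) (F₁ : Finset V₁) (F₂ : Finset V₂),
    F₁.card = t ∧ F₂.card = t ∧ F₁ ∈ Δ₁.faces ∧ F₂ ∈ Δ₂.faces ∧
    (∀ F ∈ Δ₁.faces, F₁ ⊆ F → F = F₁) ∧
    (∀ F ∈ Δ₂.faces, F₂ ⊆ F → F = F₂) ∧
    Set.range f₁ ∪ Set.range f₂ = Set.univ ∧
    Set.range f₁ ∩ Set.range f₂ = ↑(F₁.image ⇑f₁) ∧
    F₁.image ⇑f₁ = F₂.image ⇑f₂ ∧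
    Δ.faces = (Δ₁.faces.image (Finset.image ⇑f₁) ∪ Δ₂.faces.image (Finset.image ⇑f₂))
      \ {F₁.image ⇑f₁}

/-
Write `K` for the glued clique and `c(H)` for the number of components of `H`. For `W ⊆ V`,
the components of `G₁[W ∩ V₁]` and of `G₂[W ∩ V₂]` together map onto those of `G[W]`, and
injectively on each side: a walk of `G[W]` can leave `V₁` only through `K`, so collapsing
everything outside `V₁` onto one clique vertex turns it into a walk of `G₁[W ∩ V₁]`. Components
from the two sides have the same image exactly when both meet `K`, which happens for a single
pair iff `W` meets `K`. Hence
`c(G[W]) - 1 = (c(G₁[W ∩ V₁]) - 1) + (c(G₂[W ∩ V₂]) - 1) + [W ∩ K = ∅]`,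
and summing over the `k`-subsets `W`, grouped by `i = |W ∩ V₁|`, gives the formula.
-/

open SimpleGraph Set

namespace Finset

variable {α β R : Type*} [Fintype β] [DecidableEq β] [CommSemiring R]

theorem sum_powersetCard_inter (A : Finset β) (g : Finset β → R) (k : ℕ) :
    ∑ W ∈ powersetCard k univ, g (W ∩ A) =
      ∑ i ∈ range (k + 1), (∑ U ∈ powersetCard i A, g U) * ((#Aᶜ).choose (k - i) : R) := by
  have hsplit : ∀ i, (∑ U ∈ powersetCard i A, g U) * ((#Aᶜ).choose (k - i) : R) =
      ∑ p ∈ powersetCard i A ×ˢ powersetCard (k - i) Aᶜ, g p.1 := by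
    intro i
    rw [sum_product, sum_mul]
    simp [mul_comm]
  simp only [hsplit]
  rw [← sum_sigma (range (k + 1)) (fun i => powersetCard i A ×ˢ powersetCard (k - i) Aᶜ)
    (fun p => g p.2.1)]
  refine sum_nbij' (fun W => ⟨#(W ∩ A), (W ∩ A, W \ A)⟩) (fun p => p.2.1 ∪ p.2.2) ?_ ?_ ?_ ?_ ?_
  · intro W hW
    have := card_inter_add_card_sdiff W A
    simp only [mem_powersetCard, subset_univ, true_and] at hW
    simp only [mem_sigma, mem_range, mem_product, mem_powersetCard]
    exact ⟨by omega, ⟨inter_subset_right, trivial⟩,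
      fun x hx => mem_compl.2 (mem_sdiff.1 hx).2, by omega⟩
  · rintro ⟨i, U, T⟩ hp
    simp only [mem_sigma, mem_range, mem_product, mem_powersetCard] at hp
    obtain ⟨hi, ⟨hUA, rfl⟩, hTA, hT⟩ := hp
    simp only [mem_powersetCard, subset_univ, true_and]
    rw [card_union_of_disjoint (disjoint_of_subset_left hUA
      (subset_compl_iff_disjoint_right.1 hTA).symm)]
    omega
  · intro W _
    exact sup_inf_sdiff W A
  · rintro ⟨i, U, T⟩ hp
    simp only [mem_sigma, mem_range, mem_product, mem_powersetCard] at hp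
    obtain ⟨-, ⟨hUA, rfl⟩, hTA, -⟩ := hp
    have hTA' := subset_compl_iff_disjoint_right.1 hTA
    have hU : (U ∪ T) ∩ A = U := by
      rw [union_inter_distrib_right, inter_eq_left.2 hUA, disjoint_iff_inter_eq_empty.1 hTA',
        union_empty]
    have hT : (U ∪ T) \ A = T := by
      rw [union_sdiff_distrib, sdiff_eq_empty_iff_subset.2 hUA, empty_union,
        sdiff_eq_self_of_disjoint hTA']
    simp only [hU, hT]
  · exact fun _ _ => rfl

theorem sum_powersetCard_preimage [Fintype α] (f : α ↪ β) (g : Finset α → R) (k : ℕ) :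
    ∑ W ∈ powersetCard k univ, g (W.preimage f f.injective.injOn) =
      ∑ i ∈ range (k + 1), (∑ S ∈ powersetCard i univ, g S) *
        ((Fintype.card β - Fintype.card α).choose (k - i) : R) := by
  have hpre : ∀ W : Finset β, W.preimage f f.injective.injOn =
      (W ∩ univ.map f).preimage f f.injective.injOn := fun W => by ext; simp
  rw [sum_congr rfl fun W _ => congrArg g (hpre W),
    sum_powersetCard_inter (univ.map f) (fun U => g (U.preimage f f.injective.injOn)),
    card_compl, card_map, card_univ]
  refine sum_congr rfl fun i _ => ?_
  rw [powersetCard_map, sum_map]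
  simp only [RelEmbedding.coe_toEmbedding, mapEmbedding_apply, preimage_map]

theorem card_filter_disjoint_powersetCard (K : Finset β) (k : ℕ) :
    #{W ∈ powersetCard k (univ : Finset β) | Disjoint W K} = (Fintype.card β - #K).choose k := by
  have : {W ∈ powersetCard k (univ : Finset β) | Disjoint W K} = powersetCard k Kᶜ := by
    ext W
    simp [mem_powersetCard, subset_compl_iff_disjoint_right, and_comm]
  rw [this, card_powersetCard, card_compl]

end Finset

namespace SimpleGraph

variable {α β : Type*} {H : SimpleGraph α} {H' : SimpleGraph β}

theorem ConnectedComponent.map_injective_of_leftInverse (φ : H →g H') (r : β → α)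
    (hr : Function.LeftInverse r φ) (hadj : ∀ ⦃u v⦄, H'.Adj u v → H.Reachable (r u) (r v)) :
    Function.Injective (ConnectedComponent.map φ) := by
  refine fun c c' => ConnectedComponent.ind₂ (fun a b hab => ?_) c c'
  rw [ConnectedComponent.map_mk, ConnectedComponent.map_mk, ConnectedComponent.eq,
    reachable_iff_reflTransGen] at hab
  have : Relation.ReflTransGen H.Adj (r (φ a)) (r (φ b)) :=
    hab.lift' r fun u v huv => (reachable_iff_reflTransGen _ _).1 (hadj huv)
  rw [hr a, hr b, ← reachable_iff_reflTransGen] at this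
  exact ConnectedComponent.sound this

theorem Reachable.exists_boundary_adj {u v : α} (h : H.Reachable u v) (S : Set α) (hu : u ∈ S)
    (hv : v ∉ S) : ∃ a b, H.Reachable u a ∧ H.Adj a b ∧ a ∈ S ∧ b ∉ S := by
  classical
  obtain ⟨p⟩ := h
  obtain ⟨d, hd, hdS, hdS'⟩ := p.exists_boundary_dart S hu hv
  exact ⟨d.fst, d.snd, ⟨p.takeUntil _ (p.dart_fst_mem_support_of_mem_darts hd)⟩, d.adj, hdS, hdS'⟩

theorem IsClique.reachable_induce {S s : Set α} (hS : H.IsClique S) {a b : s} (ha : ↑a ∈ S)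
    (hb : ↑b ∈ S) : (H.induce s).Reachable a b := by
  obtain rfl | hab := eq_or_ne a b
  · rfl
  · exact Adj.reachable (hS ha hb (Subtype.coe_ne_coe.2 hab))

end SimpleGraph

structure IsConnSumAlong {V₁ V₂ V : Type*} (G₁ : SimpleGraph V₁) (G₂ : SimpleGraph V₂)
    (G : SimpleGraph V) (f₁ : V₁ ↪ V) (f₂ : V₂ ↪ V) (F₁ : Set V₁) (F₂ : Set V₂) : Prop where
  isClique₁ : G₁.IsClique F₁
  isClique₂ : G₂.IsClique F₂
  range_union : range f₁ ∪ range f₂ = univ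
  range_inter : range f₁ ∩ range f₂ = f₁ '' F₁
  image_eq : f₁ '' F₁ = f₂ '' F₂
  eq_sup : G = G₁.map f₁ ⊔ G₂.map f₂

namespace IsConnSumAlong

variable {V₁ V₂ V : Type*} {G₁ : SimpleGraph V₁} {G₂ : SimpleGraph V₂} {G : SimpleGraph V}
  {f₁ : V₁ ↪ V} {f₂ : V₂ ↪ V} {F₁ : Set V₁} {F₂ : Set V₂}
  (h : IsConnSumAlong G₁ G₂ G f₁ f₂ F₁ F₂)
include h

theorem symm : IsConnSumAlong G₂ G₁ G f₂ f₁ F₂ F₁ where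
  isClique₁ := h.isClique₂
  isClique₂ := h.isClique₁
  range_union := by rw [union_comm, h.range_union]
  range_inter := by rw [inter_comm, h.range_inter, h.image_eq]
  image_eq := h.image_eq.symm
  eq_sup := by rw [sup_comm, h.eq_sup]

def hom : G₁ →g G where
  toFun := f₁
  map_rel' hab := by
    rw [h.eq_sup, sup_adj, map_adj]
    exact Or.inl ⟨_, _, hab, rfl, rfl⟩

theorem isClique_image : G.IsClique (f₁ '' F₁) :=
  h.isClique₁.map.mono (h.eq_sup ▸ le_sup_left)

theorem mem_image_of_adj {a b : V} (hab : G.Adj a b) (ha : a ∈ range f₁) (hb : b ∉ range f₁) :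
    a ∈ f₁ '' F₁ := by
  rw [h.eq_sup, sup_adj, map_adj, map_adj] at hab
  rcases hab with ⟨x, y, -, -, rfl⟩ | ⟨x, y, -, rfl, -⟩
  · exact absurd ⟨y, rfl⟩ hb
  · exact h.range_inter ▸ ⟨ha, x, rfl⟩

theorem adj_or_mem_of_adj {x y : V₁} (hxy : G.Adj (f₁ x) (f₁ y)) :
    G₁.Adj x y ∨ x ∈ F₁ ∧ y ∈ F₁ := by
  rw [h.eq_sup, sup_adj, map_adj, map_adj] at hxy
  rcases hxy with ⟨x', y', hxy', hx, hy⟩ | ⟨x', y', -, hx, hy⟩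
  · rw [f₁.injective hx, f₁.injective hy] at hxy'
    exact Or.inl hxy'
  · have hmem : ∀ {z x'}, f₂ x' = f₁ z → z ∈ F₁ := fun {z x'} hz =>
      f₁.injective.mem_set_image.1 (h.range_inter ▸ ⟨⟨z, rfl⟩, x', hz⟩)
    exact Or.inr ⟨hmem hx, hmem hy⟩

def homInduce (W : Set V) : G₁.induce (f₁ ⁻¹' W) →g G.induce W :=
  SimpleGraph.induceHom h.hom (mapsTo_preimage f₁ W)

theorem homInduce_injective (W : Set V) : Function.Injective (h.homInduce W) :=
  fun _ _ hab => Subtype.ext (f₁.injective (congrArg Subtype.val hab))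

theorem exists_homInduce_eq {W : Set V} {u : W} (hu : ↑u ∈ range f₁) :
    ∃ a, h.homInduce W a = u := by
  obtain ⟨a, ha⟩ := hu
  exact ⟨⟨a, show f₁ a ∈ W from ha ▸ u.2⟩, Subtype.ext ha⟩

theorem map_homInduce_injective (W : Set V) :
    Function.Injective (ConnectedComponent.map (h.homInduce W)) := by
  rcases isEmpty_or_nonempty (f₁ ⁻¹' W) with hW | ⟨⟨x₁⟩⟩
  · intro c
    induction c using ConnectedComponent.ind
    exact isEmptyElim ‹_›
  obtain ⟨x₀, hx₀⟩ : ∃ x₀ : f₁ ⁻¹' W, (∃ z ∈ F₁, f₁ z ∈ W) → ↑x₀ ∈ F₁ := by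
    by_cases hK : ∃ z ∈ F₁, f₁ z ∈ W
    · obtain ⟨z, hz, hzW⟩ := hK
      exact ⟨⟨z, hzW⟩, fun _ => hz⟩
    · exact ⟨x₁, fun h' => absurd h' hK⟩
  -- `r` retracts `G[W]` onto `G₁[f₁ ⁻¹' W]` by collapsing everything outside `range f₁` to
  -- `x₀`, which lies in the clique as soon as `W` meets it.
  set r := Function.extend (h.homInduce W) id fun _ => x₀
  have hr : Function.LeftInverse r (h.homInduce W) := (h.homInduce_injective W).extend_apply _ _
  have hr_not : ∀ u : W, ↑u ∉ range f₁ → r u = x₀ := fun u hu =>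
    Function.extend_apply' _ _ _ fun ⟨a, ha⟩ => hu ⟨a, congrArg Subtype.val ha⟩
  have hreach : ∀ (a : f₁ ⁻¹' W) (v : W), G.Adj (f₁ a) ↑v → ↑v ∉ range f₁ →
      (G₁.induce (f₁ ⁻¹' W)).Reachable a x₀ := fun a v hav hv => by
    have ha : ↑a ∈ F₁ := f₁.injective.mem_set_image.1 (h.mem_image_of_adj hav ⟨a, rfl⟩ hv)
    exact h.isClique₁.reachable_induce ha (hx₀ ⟨a, ha, a.2⟩)
  refine ConnectedComponent.map_injective_of_leftInverse _ r hr fun u v huv => ?_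
  by_cases hu : ↑u ∈ range f₁ <;> by_cases hv : ↑v ∈ range f₁
  · obtain ⟨a, rfl⟩ := h.exists_homInduce_eq hu
    obtain ⟨b, rfl⟩ := h.exists_homInduce_eq hv
    rw [hr a, hr b]
    rcases h.adj_or_mem_of_adj huv with hab | ⟨ha, hb⟩
    · exact Adj.reachable hab
    · exact h.isClique₁.reachable_induce ha hb
  · obtain ⟨a, rfl⟩ := h.exists_homInduce_eq hu
    rw [hr a, hr_not v hv]
    exact hreach a v huv hv
  · obtain ⟨b, rfl⟩ := h.exists_homInduce_eq hv
    rw [hr b, hr_not u hu]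
    exact (hreach b u huv.symm hu).symm
  · rw [hr_not u hu, hr_not v hv]

theorem exists_mem_image_reachable {W : Set V} {u v : W} (huv : (G.induce W).Reachable u v)
    (hu : ↑u ∈ range f₁) (hv : ↑v ∈ range f₂) :
    ∃ z : W, ↑z ∈ f₁ '' F₁ ∧ (G.induce W).Reachable u z := by
  by_cases hv₁ : ↑v ∈ range f₁
  · exact ⟨v, h.range_inter ▸ ⟨hv₁, hv⟩, huv⟩
  · obtain ⟨a, b, hua, hab, ha, hb⟩ := huv.exists_boundary_adj (Subtype.val ⁻¹' range f₁) hu hv₁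
    exact ⟨a, h.mem_image_of_adj hab ha hb, hua⟩

open Classical in
theorem card_connectedComponent_add [Finite V] (W : Set V) :
    Nat.card (G.induce W).ConnectedComponent + (if Disjoint W (f₁ '' F₁) then 0 else 1) =
      Nat.card (G₁.induce (f₁ ⁻¹' W)).ConnectedComponent +
        Nat.card (G₂.induce (f₂ ⁻¹' W)).ConnectedComponent := by
  set m₁ := ConnectedComponent.map (h.homInduce W)
  set m₂ := ConnectedComponent.map (h.symm.homInduce W)
  have hunion : range m₁ ∪ range m₂ = univ := by
    refine eq_univ_of_forall fun D => ?_
    induction D using ConnectedComponent.ind with | h u => ?_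
    rcases (h.range_union ▸ mem_univ (u : V) : ↑u ∈ range f₁ ∪ range f₂) with hu | hu
    · obtain ⟨a, rfl⟩ := h.exists_homInduce_eq hu
      exact Or.inl ⟨_, ConnectedComponent.map_mk _ _⟩
    · obtain ⟨a, rfl⟩ := h.symm.exists_homInduce_eq hu
      exact Or.inr ⟨_, ConnectedComponent.map_mk _ _⟩
  have hinter : range m₁ ∩ range m₂ =
      (G.induce W).connectedComponentMk '' (Subtype.val ⁻¹' (f₁ '' F₁)) := by
    ext D
    constructor
    · rintro ⟨⟨c, rfl⟩, ⟨d, hd⟩⟩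
      induction c using ConnectedComponent.ind with | h x => ?_
      induction d using ConnectedComponent.ind with | h y => ?_
      simp only [m₁, m₂, ConnectedComponent.map_mk] at hd ⊢
      obtain ⟨z, hz, hxz⟩ :=
        h.exists_mem_image_reachable (ConnectedComponent.eq.1 hd.symm) ⟨x, rfl⟩ ⟨y, rfl⟩
      exact ⟨z, hz, (ConnectedComponent.sound hxz).symm⟩
    · rintro ⟨z, hz, rfl⟩
      obtain ⟨a, ha⟩ := h.exists_homInduce_eq (image_subset_range _ _ hz)
      obtain ⟨b, hb⟩ := h.symm.exists_homInduce_eq (image_subset_range _ _ (h.image_eq ▸ hz))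
      exact ⟨⟨_, (ConnectedComponent.map_mk _ a).trans (congrArg _ ha)⟩,
        ⟨_, (ConnectedComponent.map_mk _ b).trans (congrArg _ hb)⟩⟩
  have hclique : ((G.induce W).connectedComponentMk '' (Subtype.val ⁻¹' (f₁ '' F₁))).ncard =
      if Disjoint W (f₁ '' F₁) then 0 else 1 := by
    split_ifs with hW
    · rw [ncard_eq_zero, image_eq_empty, Set.eq_empty_iff_forall_notMem]
      exact fun z hz => hW.ne_of_mem z.2 hz rfl
    · obtain ⟨v, hvW, hvK⟩ := not_disjoint_iff.1 hW
      refine ncard_eq_one.2 ⟨(G.induce W).connectedComponentMk ⟨v, hvW⟩, ?_⟩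
      ext D
      constructor
      · rintro ⟨z, hz, rfl⟩
        exact ConnectedComponent.sound (h.isClique_image.reachable_induce hz hvK)
      · rintro rfl
        exact ⟨_, hvK, rfl⟩
  calc Nat.card (G.induce W).ConnectedComponent + (if Disjoint W (f₁ '' F₁) then 0 else 1)
      = (range m₁ ∪ range m₂).ncard + (range m₁ ∩ range m₂).ncard := by
        rw [hunion, hinter, hclique, ncard_univ]
    _ = (range m₁).ncard + (range m₂).ncard := ncard_union_add_ncard_inter _ _
    _ = _ := by
        rw [ncard_range_of_injective (h.map_homInduce_injective W),
          ncard_range_of_injective (h.symm.map_homInduce_injective W)]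

theorem card_add_ncard [Finite V] :
    Nat.card V + (f₁ '' F₁).ncard = Nat.card V₁ + Nat.card V₂ := by
  rw [← h.range_inter, ← ncard_range_of_injective f₁.injective,
    ← ncard_range_of_injective f₂.injective, ← ncard_union_add_ncard_inter, h.range_union,
    ncard_univ]

end IsConnSumAlong

theorem SimpleGraph.sum_card_connectedComponent_induce_preimage {α β : Type} [Fintype α]
    [Fintype β] [DecidableEq α] [DecidableEq β] (H : SimpleGraph α) (f : α ↪ β) (k : ℕ) :
    ∑ W ∈ powersetCard k (univ : Finset β),
        ((Nat.card (H.induce (f ⁻¹' (W : Set β))).ConnectedComponent : ℤ) - 1) =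
      ∑ i ∈ range (k + 1), graphB i H * ((Fintype.card β - Fintype.card α).choose (k - i) : ℤ) := by
  refine (sum_congr rfl fun W _ => ?_).trans (sum_powersetCard_preimage f
    (fun S => (Nat.card (H.induce (S : Set α)).ConnectedComponent : ℤ) - 1) k)
  rw [coe_preimage]

theorem IsConnSumAlong.graphB_eq {V₁ V₂ V : Type} {G₁ : SimpleGraph V₁} {G₂ : SimpleGraph V₂}
    {G : SimpleGraph V} {f₁ : V₁ ↪ V} {f₂ : V₂ ↪ V} {F₁ : Set V₁} {F₂ : Set V₂}
    [Fintype V₁] [DecidableEq V₁] [Fintype V₂] [DecidableEq V₂] [Fintype V]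
    [DecidableEq V] (h : IsConnSumAlong G₁ G₂ G f₁ f₂ F₁ F₂) (k : ℕ) :
    graphB k G =
      ∑ W ∈ powersetCard k (univ : Finset V),
          ((Nat.card (G₁.induce (f₁ ⁻¹' (W : Set V))).ConnectedComponent : ℤ) - 1) +
        ∑ W ∈ powersetCard k (univ : Finset V),
          ((Nat.card (G₂.induce (f₂ ⁻¹' (W : Set V))).ConnectedComponent : ℤ) - 1) +
        #{W ∈ powersetCard k (univ : Finset V) | Disjoint W (toFinite (f₁ '' F₁)).toFinset} := by
  rw [graphB, ← sum_add_distrib, ← sum_boole (R := ℤ), ← sum_add_distrib]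
  refine sum_congr rfl fun W _ => ?_
  have hW := h.card_connectedComponent_add W
  rw [← Finite.coe_toFinset (toFinite (f₁ '' F₁)), disjoint_coe] at hW
  split_ifs at hW ⊢ <;> omega

/-- the formula for `b_k` of a `t`-connected sum of two graphs. -/
theorem bk_connSum {V₁ V₂ V : Type} [Fintype V₁] [DecidableEq V₁] [Fintype V₂] [DecidableEq V₂]
    [Fintype V] [DecidableEq V] (t k n₁ n₂ : ℕ)
    (G₁ : SimpleGraph V₁) (G₂ : SimpleGraph V₂) (G : SimpleGraph V)
    (hn₁ : Fintype.card V₁ = n₁) (hn₂ : Fintype.card V₂ = n₂)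
    (h : IsConnSum t G₁ G₂ G) :
    graphB k G =
      (∑ i ∈ Finset.range (k + 1),
        (graphB i G₁ * ((n₂ - t).choose (k - i)) +
         graphB i G₂ * ((n₁ - t).choose (k - i))))
      + ((n₁ + n₂ - 2 * t).choose k) := by
  obtain ⟨f₁, f₂, F₁, F₂, hF₁, -, hc₁, hc₂, hcov, hint, himg, hadj⟩ := h
  have hG : IsConnSumAlong G₁ G₂ G f₁ f₂ F₁ F₂ :=
    ⟨hc₁, hc₂, hcov, hint, himg, by ext a b; simp only [hadj, sup_adj, map_adj]⟩
  have hK : (f₁ '' F₁).ncard = t := by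
    rw [ncard_image_of_injective _ f₁.injective, ← Nat.card_coe_set_eq, hF₁]
  have hcard := hG.card_add_ncard
  simp only [hK, Nat.card_eq_fintype_card, hn₁, hn₂] at hcard
  rw [hG.graphB_eq, sum_card_connectedComponent_induce_preimage,
    sum_card_connectedComponent_induce_preimage, card_filter_disjoint_powersetCard,
    ← ncard_eq_toFinset_card, hK, ← sum_add_distrib, hn₁, hn₂,
    show Fintype.card V - n₁ = n₂ - t by omega, show Fintype.card V - n₂ = n₁ - t by omega,
    show Fintype.card V - t = n₁ + n₂ - 2 * t by omega]
end

section
/- Let G be a t-connected sum of n copies of the complete graph K_{t+1}, for a positive integer t. Then G has t + n vertices and b_k(G) = (k−1)·C(n,k) for k ≥ 1. -/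
open Finset

/-!
Gluing `K_{t+1}` to `G₁` along a `t`-clique `N` adds exactly one vertex, adjacent precisely to
`N`: the sum is the cone over `N`. A `(j+1)`-subset of the cone either avoids the apex, or is the
apex together with a `j`-subset `W` of `G₁`. In the latter case the apex joins the component of
`W` containing the clique `W ∩ N`, or forms a component of its own when `W ∩ N = ∅`. Hence
`b_{j+1}(cone) = b_{j+1}(G₁) + b_j(G₁) + C(|V₁| - t, j)`, and since `b_0 = -1`, Pascal's rule
carries `b_k = (k - 1)·C(n, k)`, valid also for `k = 0`, from `n` to `n + 1`.
-/

namespace Finset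

theorem sum_powersetCard_succ_insert {α β : Type*} [DecidableEq α] [AddCommMonoid β] {a : α}
    {s : Finset α} (ha : a ∉ s) (n : ℕ) (f : Finset α → β) :
    ∑ t ∈ powersetCard (n + 1) (insert a s), f t =
      ∑ t ∈ powersetCard (n + 1) s, f t + ∑ t ∈ powersetCard n s, f (insert a t) := by
  have hnotMem : ∀ t ∈ powersetCard n s, a ∉ t := fun t ht =>
    notMem_mono (mem_powersetCard.1 ht).1 ha
  rw [powersetCard_succ_insert ha, sum_union, sum_image]
  · intro t ht u hu htu
    rw [← erase_insert (hnotMem t ht), ← erase_insert (hnotMem u hu), htu]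
  · refine disjoint_left.2 fun t ht ht' => ?_
    obtain ⟨u, -, rfl⟩ := mem_image.1 ht'
    exact ha ((mem_powersetCard.1 ht).1 (mem_insert_self a u))

end Finset

theorem Set.exists_eq_compl_singleton {α : Type*} [Finite α] {s : Set α}
    (h : Nat.card s + 1 = Nat.card α) : ∃ a, s = {a}ᶜ := by
  have hcompl : sᶜ.ncard = 1 := by
    have := Set.ncard_add_ncard_compl s
    rw [← Nat.card_coe_set_eq] at this
    omega
  obtain ⟨a, ha⟩ := Set.ncard_eq_one.1 hcompl
  exact ⟨a, by rw [← ha, compl_compl]⟩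

namespace SimpleGraph

variable {V W : Type*} {G : SimpleGraph V} {G' : SimpleGraph W}

theorem Embedding.card_connectedComponent_induce_image (f : G ↪g G') (s : Set V) :
    Nat.card (G'.induce (f '' s)).ConnectedComponent =
      Nat.card (G.induce s).ConnectedComponent :=
  Nat.card_congr
    (Iso.connectedComponentEquiv
      { toEquiv := Equiv.Set.image f s f.injective
        map_rel_iff' := f.map_rel_iff }).symm

def ConnectedComponent.liftAdj {β : Sort*} (f : V → β) (hf : ∀ x y, G.Adj x y → f x = f y) :
    G.ConnectedComponent → β :=
  ConnectedComponent.lift f fun _ _ p hp => by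
    induction p with
    | nil => rfl
    | cons hadj _ ih => exact (hf _ _ hadj).trans (ih hp.of_cons)

@[simp]
theorem ConnectedComponent.liftAdj_mk {β : Sort*} {f : V → β}
    {hf : ∀ x y, G.Adj x y → f x = f y} (v : V) :
    ConnectedComponent.liftAdj f hf (G.connectedComponentMk v) = f v := rfl

section InsertVertex

variable {v : V} {s : Set V}

theorem card_connectedComponent_induce_insert_of_adj (hv : v ∉ s) {u : V} (hu : u ∈ s)
    (hvu : G.Adj v u)
    (hreach : ∀ x (hx : x ∈ s), G.Adj v x → (G.induce s).Reachable ⟨u, hu⟩ ⟨x, hx⟩) :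
    Nat.card (G.induce (insert v s)).ConnectedComponent =
      Nat.card (G.induce s).ConnectedComponent := by
  classical
  let r (x : (insert v s : Set V)) : (G.induce s).ConnectedComponent :=
    if hx : (x : V) = v then (G.induce s).connectedComponentMk ⟨u, hu⟩
    else (G.induce s).connectedComponentMk ⟨x, x.2.resolve_left hx⟩
  have hr : ∀ x y, (G.induce (insert v s)).Adj x y → r x = r y := by
    rintro ⟨x, hx⟩ ⟨y, hy⟩ (hxy : G.Adj x y)
    by_cases hxv : x = v <;> by_cases hyv : y = v
    · exact absurd (hxv ▸ hyv ▸ hxy) (G.irrefl)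
    · subst hxv
      simpa [r, hyv] using ConnectedComponent.sound (hreach y _ hxy)
    · subst hyv
      simpa [r, hxv] using (ConnectedComponent.sound (hreach x _ hxy.symm)).symm
    · simpa [r, hxv, hyv] using ConnectedComponent.connectedComponentMk_eq_of_adj
        (G := G.induce s) (v := ⟨x, hx.resolve_left hxv⟩) (w := ⟨y, hy.resolve_left hyv⟩) hxy
  refine Nat.card_congr
    { toFun := ConnectedComponent.liftAdj r hr
      invFun := ConnectedComponent.map (G.induceHomOfLE (Set.subset_insert v s)).toHom
      left_inv := ConnectedComponent.ind fun ⟨x, hx⟩ => ?_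
      right_inv := ConnectedComponent.ind fun ⟨x, hx⟩ => ?_ }
  · by_cases hxv : x = v
    · subst hxv
      simp only [ConnectedComponent.liftAdj_mk, r, dif_pos, ConnectedComponent.map_mk]
      exact ConnectedComponent.connectedComponentMk_eq_of_adj (G := G.induce (insert x s))
        (v := ⟨u, Or.inr hu⟩) (w := ⟨x, hx⟩) hvu.symm
    · simp only [ConnectedComponent.liftAdj_mk, r, dif_neg hxv, ConnectedComponent.map_mk]
      rfl
  · exact dif_neg (ne_of_mem_of_not_mem hx hv)

theorem card_connectedComponent_induce_insert_of_forall_not_adj [Finite s] (hv : v ∉ s)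
    (hnadj : ∀ u ∈ s, ¬ G.Adj v u) :
    Nat.card (G.induce (insert v s)).ConnectedComponent =
      Nat.card (G.induce s).ConnectedComponent + 1 := by
  classical
  let r (x : (insert v s : Set V)) : Option (G.induce s).ConnectedComponent :=
    if hx : (x : V) = v then none
    else some ((G.induce s).connectedComponentMk ⟨x, x.2.resolve_left hx⟩)
  have hr : ∀ x y, (G.induce (insert v s)).Adj x y → r x = r y := by
    rintro ⟨x, hx⟩ ⟨y, hy⟩ (hxy : G.Adj x y)
    have hxv : x ≠ v := by rintro rfl; exact hnadj y (hy.resolve_left (hxy.ne.symm)) hxy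
    have hyv : y ≠ v := by rintro rfl; exact hnadj x (hx.resolve_left hxy.ne) hxy.symm
    simpa [r, hxv, hyv] using ConnectedComponent.connectedComponentMk_eq_of_adj
      (G := G.induce s) (v := ⟨x, hx.resolve_left hxv⟩) (w := ⟨y, hy.resolve_left hyv⟩) hxy
  rw [← Finite.card_option]
  refine Nat.card_congr
    { toFun := ConnectedComponent.liftAdj r hr
      invFun := fun o => o.elim ((G.induce (insert v s)).connectedComponentMk ⟨v, .inl rfl⟩)
        (ConnectedComponent.map (G.induceHomOfLE (Set.subset_insert v s)).toHom)
      left_inv := ?_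
      right_inv := ?_ }
  · refine ConnectedComponent.ind fun ⟨x, hx⟩ => ?_
    by_cases hxv : x = v
    · subst hxv
      simp only [ConnectedComponent.liftAdj_mk, r, dif_pos, Option.elim_none]
    · simp only [ConnectedComponent.liftAdj_mk, r, dif_neg hxv, Option.elim_some,
        ConnectedComponent.map_mk]
      rfl
  · rintro (_ | c)
    · exact dif_pos rfl
    · induction c using ConnectedComponent.ind with
      | h x => exact dif_neg (ne_of_mem_of_not_mem x.2 hv)

end InsertVertex

end SimpleGraph

open SimpleGraph

section GraphB

variable {V V' : Type} [Fintype V] [DecidableEq V] [Fintype V'] [DecidableEq V']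

theorem graphB_congr {G : SimpleGraph V} {G' : SimpleGraph V'} (φ : G ≃g G') (k : ℕ) :
    graphB k G = graphB k G' := by
  unfold graphB
  rw [← map_univ_equiv φ.toEquiv, powersetCard_map, sum_map]
  refine sum_congr rfl fun W _ => ?_
  rw [RelEmbedding.coe_toEmbedding, mapEmbedding_apply, coe_map]
  exact congrArg (fun c : ℕ => (c : ℤ) - 1)
    (φ.toEmbedding.card_connectedComponent_induce_image W).symm

theorem graphB_zero (G : SimpleGraph V) : graphB 0 G = -1 := by
  simp [graphB]

theorem graphB_top {k : ℕ} (hk : k ≠ 0) : graphB k (⊤ : SimpleGraph V) = 0 := by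
  refine sum_eq_zero fun W hW => ?_
  have : Nonempty (W : Set V) := by
    rw [mem_powersetCard_univ] at hW
    exact (card_pos.1 (hW ▸ Nat.pos_of_ne_zero hk)).to_subtype
  have hconn : ((⊤ : SimpleGraph V).induce (W : Set V)).Connected := by
    rw [induce_top]; exact connected_top
  have hone : Nat.card ((⊤ : SimpleGraph V).induce (W : Set V)).ConnectedComponent = 1 :=
    Nat.card_eq_one_iff_unique.2 ⟨hconn.preconnected.subsingleton_connectedComponent,
      ⟨(induce _ ⊤).connectedComponentMk hconn.nonempty.some⟩⟩
  rw [hone, Nat.cast_one, sub_self]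

end GraphB

namespace SimpleGraph

variable {V : Type*}

def cone (G : SimpleGraph V) (N : Set V) : SimpleGraph (Option V) where
  Adj
    | some x, some y => G.Adj x y
    | some x, none | none, some x => x ∈ N
    | none, none => False
  symm := ⟨by
    rintro (_ | x) (_ | y) h
    exacts [h, h, h, h.symm]⟩
  loopless := ⟨by
    rintro (_ | x) h
    exacts [h, G.irrefl h]⟩

variable {G : SimpleGraph V} {N : Set V}

@[simp] theorem cone_adj_none_some {x : V} : (cone G N).Adj none (some x) ↔ x ∈ N := Iff.rfl

def Embedding.coneSome (G : SimpleGraph V) (N : Set V) : G ↪g cone G N :=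
  ⟨Function.Embedding.some, Iff.rfl⟩

theorem card_connectedComponent_cone_induce_insert_none [DecidableEq V] {N : Finset V}
    (hN : G.IsClique (N : Set V)) (W : Finset V) :
    Nat.card ((cone G N).induce (insert none (some '' W))).ConnectedComponent =
      Nat.card (G.induce W).ConnectedComponent + if Disjoint W N then 1 else 0 := by
  have hnone : none ∉ some '' (W : Set V) := by simp
  rw [← (Embedding.coneSome G N).card_connectedComponent_induce_image]
  split_ifs with hWN
  · refine card_connectedComponent_induce_insert_of_forall_not_adj hnone ?_
    rintro _ ⟨x, hxW, rfl⟩ (hxN : x ∈ N)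
    exact Finset.disjoint_left.1 hWN hxW hxN
  · obtain ⟨u, huW, huN⟩ := not_disjoint_iff.1 hWN
    refine (card_connectedComponent_induce_insert_of_adj hnone ⟨u, huW, rfl⟩
      (cone_adj_none_some.2 huN) ?_).trans (add_zero _).symm
    rintro _ ⟨x, hxW, rfl⟩ (hxN : x ∈ N)
    obtain rfl | hux := eq_or_ne u x
    · rfl
    · exact Adj.reachable (G := (cone G N).induce _) (hN huN hxN hux)

end SimpleGraph

theorem graphB_cone {V : Type} [Fintype V] [DecidableEq V] {G : SimpleGraph V} {N : Finset V}
    (hN : G.IsClique (N : Set V)) (j : ℕ) :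
    graphB (j + 1) (cone G N) =
      graphB (j + 1) G + graphB j G + ((Fintype.card V - #N).choose j : ℤ) := by
  have huniv : (univ : Finset (Option V)) = insert none (univ.map .some) := by
    ext (_ | x) <;> simp
  unfold graphB
  rw [huniv, sum_powersetCard_succ_insert (by simp), powersetCard_map, sum_map,
    powersetCard_map, sum_map, add_assoc]
  congr 1
  · refine sum_congr rfl fun W _ => ?_
    rw [RelEmbedding.coe_toEmbedding, mapEmbedding_apply, coe_map]
    exact congrArg (fun c : ℕ => (c : ℤ) - 1)
      ((Embedding.coneSome G N).card_connectedComponent_induce_image W)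
  · have hcount : #{W ∈ powersetCard j (univ : Finset V) | Disjoint W N} =
        (Fintype.card V - #N).choose j := by
      rw [← card_compl, ← card_powersetCard]
      congr 1
      ext W
      simp [subset_compl_iff_disjoint_right, and_comm]
    rw [← hcount, ← sum_boole, ← sum_add_distrib]
    refine sum_congr rfl fun W _ => ?_
    rw [RelEmbedding.coe_toEmbedding, mapEmbedding_apply, coe_insert, coe_map,
      Function.Embedding.some_apply, card_connectedComponent_cone_induce_insert_none hN]
    push_cast
    ring

namespace SimpleGraph

variable {V₁ V : Type*} {G₁ : SimpleGraph V₁} {G : SimpleGraph V}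

noncomputable def Embedding.coneIso (φ : G₁ ↪g G) {v : V} (hrange : Set.range φ = {v}ᶜ) :
    cone G₁ (φ ⁻¹' G.neighborSet v) ≃g G where
  toEquiv := Equiv.ofBijective (fun o => o.elim v φ) <| by
    have hne : ∀ x, φ x ≠ v := fun x => (hrange.le ⟨x, rfl⟩ :)
    refine ⟨?_, fun a => ?_⟩
    · rintro (_ | x) (_ | y) hxy
      exacts [rfl, (hne y hxy.symm).elim, (hne x hxy).elim, congrArg some (φ.injective hxy)]
    · obtain rfl | hav := eq_or_ne a v
      · exact ⟨none, rfl⟩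
      · obtain ⟨x, rfl⟩ := hrange.ge hav
        exact ⟨some x, rfl⟩
  map_rel_iff' := by
    rintro (_ | x) (_ | y)
    · simp
    · exact Iff.rfl
    · exact G.adj_comm _ _
    · exact φ.map_rel_iff

end SimpleGraph

theorem IsConnSum.exists_iso_cone {V₁ V₂ V : Type} [Finite V₂] {t : ℕ} {G₁ : SimpleGraph V₁}
    {G : SimpleGraph V} (hV₂ : Nat.card V₂ = t + 1)
    (h : IsConnSum t G₁ (⊤ : SimpleGraph V₂) G) :
    ∃ N : Set V₁, Nat.card N = t ∧ G₁.IsClique N ∧ Nonempty (cone G₁ N ≃g G) := by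
  obtain ⟨f₁, f₂, F₁, F₂, hF₁, hF₂, hF₁clique, -, hcover, hinter, himage, hadj⟩ := h
  obtain ⟨w₀, rfl⟩ := Set.exists_eq_compl_singleton (by rw [hF₂, hV₂])
  have hmem : ∀ x, f₁ x ∈ Set.range f₂ → x ∈ F₁ := by
    intro x hx
    obtain ⟨y, hy, hyx⟩ := hinter.le ⟨⟨x, rfl⟩, hx⟩
    exact f₁.injective hyx ▸ hy
  have hne : ∀ x, f₁ x ≠ f₂ w₀ := by
    intro x hx
    obtain ⟨w, hw, hww₀⟩ := himage ▸ hinter.le ⟨⟨x, rfl⟩, ⟨w₀, hx.symm⟩⟩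
    exact hw (f₂.injective (hww₀.trans hx))
  have hrange : Set.range f₁ = {f₂ w₀}ᶜ := by
    refine Set.Subset.antisymm (fun _ ⟨x, hx⟩ => hx ▸ hne x) fun a ha => ?_
    obtain ha₁ | ⟨w, rfl⟩ := hcover.ge (Set.mem_univ a)
    · exact ha₁
    · have hw : w ≠ w₀ := fun hw => ha (hw ▸ rfl)
      exact (himage.ge ⟨w, hw, rfl⟩).elim fun x hx => ⟨x, hx.2⟩
  let φ : G₁ ↪g G := ⟨f₁, fun {x y} => by
    refine ⟨fun hxy => ?_, fun hxy => (hadj _ _).2 (.inl ⟨x, y, hxy, rfl, rfl⟩)⟩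
    obtain ⟨x', y', h', hx', hy'⟩ | ⟨x', y', h', hx', hy'⟩ := (hadj _ _).1 hxy
    · rwa [f₁.injective hx', f₁.injective hy'] at h'
    · refine hF₁clique x (hmem x ⟨x', hx'⟩) y (hmem y ⟨y', hy'⟩) fun hxy => h'.ne ?_
      exact f₂.injective (by rw [hx', hy', hxy])⟩
  have hN : φ ⁻¹' G.neighborSet (f₂ w₀) = F₁ := by
    ext x
    refine ⟨fun hx => ?_, fun hx => ?_⟩
    · obtain ⟨x', y', -, hx', -⟩ | ⟨-, y', -, -, hy'⟩ := (hadj _ _).1 hx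
      · exact (hne x' hx').elim
      · exact hmem x ⟨y', hy'⟩
    · obtain ⟨w, hw, hwx⟩ : f₁ x ∈ f₂ '' {w₀}ᶜ := himage ▸ ⟨x, hx, rfl⟩
      exact (hadj _ _).2 (.inr ⟨w₀, w, Ne.symm hw, rfl, hwx⟩)
  exact ⟨F₁, hF₁, hF₁clique, ⟨hN ▸ φ.coneIso hrange⟩⟩

section ConnSumComplete

variable {V₁ V₂ V : Type} [Fintype V₁] [Fintype V] [Finite V₂] {t : ℕ} {G₁ : SimpleGraph V₁}
  {G : SimpleGraph V}

theorem IsConnSum.card_eq_of_top (hV₂ : Nat.card V₂ = t + 1)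
    (h : IsConnSum t G₁ (⊤ : SimpleGraph V₂) G) : Fintype.card V = Fintype.card V₁ + 1 := by
  obtain ⟨N, -, -, ⟨ψ⟩⟩ := h.exists_iso_cone hV₂
  rw [← Fintype.card_congr ψ.toEquiv, Fintype.card_option]

theorem IsConnSum.graphB_succ_of_top [DecidableEq V₁] [DecidableEq V]
    (hV₂ : Nat.card V₂ = t + 1) (h : IsConnSum t G₁ (⊤ : SimpleGraph V₂) G) (j : ℕ) :
    graphB (j + 1) G =
      graphB (j + 1) G₁ + graphB j G₁ + ((Fintype.card V₁ - t).choose j : ℤ) := by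
  classical
  obtain ⟨N, hNcard, hN, ⟨ψ⟩⟩ := h.exists_iso_cone hV₂
  rw [← graphB_congr ψ, ← Set.coe_toFinset N, graphB_cone (by rwa [Set.coe_toFinset]),
    ← Nat.card_eq_card_toFinset, hNcard]

end ConnSumComplete

theorem IsIterConnSum.card_eq_and_graphB_eq {t : ℕ} {l : List ((W : Type) × SimpleGraph W)}
    {P : (W : Type) × SimpleGraph W} (h : IsIterConnSum t l P)
    (hl : ∀ q ∈ l, q = ⟨Fin (t + 1), ⊤⟩) :
    ∀ [Fintype P.1] [DecidableEq P.1], Fintype.card P.1 = t + l.length ∧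
      ∀ k, graphB k P.2 = ((k : ℤ) - 1) * (l.length.choose k) := by
  induction h with
  | single p =>
    obtain rfl := hl p (List.mem_singleton_self p)
    intro _ _
    refine ⟨by convert Fintype.card_fin (t + 1); rfl, fun k => ?_⟩
    rcases k with _ | _ | k
    · simp [graphB_zero]
    · simp [graphB_top]
    · simp [graphB_top, Nat.choose_eq_zero_of_lt]
  | @cons l p q r _ hsum ih =>
    obtain rfl := hl q (by simp)
    intro _ _
    have : Fintype p.1 := Fintype.ofInjective _ hsum.choose.injective
    classical
    obtain ⟨hcard, hB⟩ := ih fun q hq => hl q (List.mem_append_left _ hq)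
    rw [List.length_append, List.length_singleton]
    refine ⟨by rw [hsum.card_eq_of_top (Nat.card_fin _), hcard, add_assoc], fun k => ?_⟩
    rcases k with _ | j
    · simp [graphB_zero]
    · rw [hsum.graphB_succ_of_top (Nat.card_fin _), hB, hB, hcard, Nat.add_sub_cancel_left,
        Nat.choose_succ_succ']
      push_cast
      ring

theorem bk_connSum_completeGraphs_general {V : Type} [Fintype V] [DecidableEq V] (t n : ℕ)
    (G : SimpleGraph V)
    (h : IsIterConnSum t (List.replicate n ⟨Fin (t + 1), (⊤ : SimpleGraph (Fin (t + 1)))⟩)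
      ⟨V, G⟩) :
    Fintype.card V = t + n ∧ ∀ k, 1 ≤ k → graphB k G = ((k : ℤ) - 1) * (n.choose k) := by
  obtain ⟨hcard, hB⟩ := h.card_eq_and_graphB_eq fun _ => List.eq_of_mem_replicate
  rw [List.length_replicate] at hcard hB
  exact ⟨hcard, fun k _ => hB k⟩

/-- a `t`-connected sum of `n` copies of `K_{t+1}` has `t + n` vertices and
`b_k = (k-1)·C(n,k)` for `k ≥ 1`. -/
theorem bk_connSum_completeGraphs {V : Type} [Fintype V] [DecidableEq V] (t n : ℕ)
    (ht : 1 ≤ t) (G : SimpleGraph V)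
    (h : IsIterConnSum t (List.replicate n ⟨Fin (t + 1), (⊤ : SimpleGraph (Fin (t + 1)))⟩)
      ⟨V, G⟩) :
    Fintype.card V = t + n ∧ ∀ k, 1 ≤ k → graphB k G = ((k : ℤ) - 1) * (n.choose k) :=
  bk_connSum_completeGraphs_general t n G h
end

section
/- Let G be the cycle graph on n ≥ 3 vertices. Then b_n(G) = 0, and for 1 ≤ k < n, b_k(G) = (n(k−1)/(n−k))·C(n−2,k). -/
open Finset

/-! If `W` is a proper subset of the vertices of the cycle, then walking forward from `i ∈ W`
along `i ↦ i + 1` until the next step would leave `W` ends at a vertex `e i ∈ W` with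
`e i + 1 ∉ W`. The map `e` is constant along edges and `i` is joined to `e i`, so the components
of `C_n|_W` correspond to the vertices `i ∈ W` with `i + 1 ∉ W`. Counting the pairs `(W, i)` by
`i` gives `c_k = n·C(n-2, k-1)`, hence `b_k = n·C(n-2, k-1) - C(n, k)`, which is the stated
expression by Pascal-type identities. For `k = n` the cycle itself is connected. -/

namespace SimpleGraph

variable {V : Type*} {G : SimpleGraph V}

theorem card_connectedComponent_eq_card_range {α : Type*} (r : V → α)
    (hadj : ∀ u v, G.Adj u v → r u = r v) (hreach : ∀ u v, r u = r v → G.Reachable u v) :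
    Nat.card G.ConnectedComponent = Nat.card (Set.range r) := by
  have hwalk : ∀ u v, G.Walk u v → r u = r v := by
    intro u v p
    induction p with
    | nil => rfl
    | cons h _ ih => exact (hadj _ _ h).trans ih
  have hrel : G.Reachable = (Setoid.ker r).r := by
    ext u v
    exact ⟨fun ⟨p⟩ => hwalk u v p, hreach u v⟩
  calc Nat.card G.ConnectedComponent = Nat.card (Quotient (Setoid.ker r)) := by
        unfold ConnectedComponent; rw [hrel]; rfl
    _ = Nat.card (Set.range r) := Nat.card_congr (Setoid.quotientKerEquivRange r)

theorem Connected.card_connectedComponent (h : G.Connected) :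
    Nat.card G.ConnectedComponent = 1 :=
  have := h.preconnected.subsingleton_connectedComponent
  Nat.card_eq_one_iff_unique.mpr ⟨this, ⟨G.connectedComponentMk h.nonempty.some⟩⟩

end SimpleGraph

namespace Function

variable {α : Type*} {s : α → α} {W : Set α}

theorem iterate_exit_induction (hexit : ∀ x, ∃ m, s^[m] x ∉ W) {P : α → Prop}
    (base : ∀ x, s x ∉ W → P x) (step : ∀ x, s x ∈ W → P (s x) → P x) (x : α) : P x := by
  obtain ⟨m, hm⟩ := hexit (s x)
  induction m generalizing x with
  | zero => exact base x hm
  | succ m ih =>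
    by_cases hx : s x ∈ W
    · exact step x hx (ih (s x) (by rwa [← iterate_succ_apply]))
    · exact base x hx

/-- The last point of the forward `s`-orbit of `x` before it leaves `W`. -/
noncomputable def runEnd (hexit : ∀ x, ∃ m, s^[m] x ∉ W) (x : α) : α :=
  open Classical in s^[Nat.find (hexit (s x))] x

variable (hexit : ∀ x, ∃ m, s^[m] x ∉ W)

theorem runEnd_of_apply_notMem {x : α} (hx : s x ∉ W) : runEnd hexit x = x := by
  classical
  rw [runEnd, (Nat.find_eq_zero _).mpr hx]
  rfl

theorem runEnd_of_apply_mem {x : α} (hx : s x ∈ W) : runEnd hexit x = runEnd hexit (s x) := by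
  classical
  have hexit' : ∃ m, s^[m + 1] (s x) ∉ W := by
    simpa only [← iterate_succ_apply] using hexit (s (s x))
  rw [runEnd, runEnd, Nat.find_comp_succ _ hexit' (by simpa using hx)]
  rfl

theorem runEnd_mem {x : α} (hx : x ∈ W) : runEnd hexit x ∈ W := by
  induction x using iterate_exit_induction hexit with
  | base x hsx => rwa [runEnd_of_apply_notMem hexit hsx]
  | step x hsx ih => rw [runEnd_of_apply_mem hexit hsx]; exact ih hsx

theorem apply_runEnd_notMem (x : α) : s (runEnd hexit x) ∉ W := by
  induction x using iterate_exit_induction hexit with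
  | base x hsx => rwa [runEnd_of_apply_notMem hexit hsx]
  | step x hsx ih => rwa [runEnd_of_apply_mem hexit hsx]

end Function

namespace SimpleGraph

variable {V : Type*} {G : SimpleGraph V} {s : V → V} {W : Set V}

theorem reachable_runEnd (hG : ∀ u v, G.Adj u v ↔ v = s u ∨ u = s v)
    (hexit : ∀ x, ∃ m, s^[m] x ∉ W) (x : W) :
    (G.induce W).Reachable x ⟨Function.runEnd hexit x, Function.runEnd_mem hexit x.2⟩ := by
  obtain ⟨x, hx⟩ := x
  induction x using Function.iterate_exit_induction hexit with
  | base x hsx =>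
    simp only [Function.runEnd_of_apply_notMem hexit hsx]
    rfl
  | step x hsx ih =>
    have hadj : (G.induce W).Adj ⟨x, hx⟩ ⟨s x, hsx⟩ := (hG _ _).mpr (.inl rfl)
    simp only [Function.runEnd_of_apply_mem hexit hsx]
    exact hadj.reachable.trans (ih hsx)

theorem card_connectedComponent_induce_eq (hG : ∀ u v, G.Adj u v ↔ v = s u ∨ u = s v)
    (hexit : ∀ x, ∃ m, s^[m] x ∉ W) :
    Nat.card (G.induce W).ConnectedComponent = Nat.card {x | x ∈ W ∧ s x ∉ W} := by
  let r : W → V := fun x => Function.runEnd hexit x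
  have hrange : Set.range r = {x | x ∈ W ∧ s x ∉ W} := by
    ext x
    refine ⟨?_, fun ⟨hx, hsx⟩ => ⟨⟨x, hx⟩, Function.runEnd_of_apply_notMem hexit hsx⟩⟩
    rintro ⟨y, rfl⟩
    exact ⟨Function.runEnd_mem hexit y.2, Function.apply_runEnd_notMem hexit y⟩
  rw [card_connectedComponent_eq_card_range r, hrange]
  · rintro ⟨u, hu⟩ ⟨v, hv⟩ huv
    rcases (hG u v).mp huv with rfl | rfl
    · exact Function.runEnd_of_apply_mem hexit hv
    · exact (Function.runEnd_of_apply_mem hexit hu).symm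
  · intro u v huv
    refine (reachable_runEnd hG hexit u).trans ?_
    convert (reachable_runEnd hG hexit v).symm using 2

theorem cycleGraph_adj_iff_eq_add_one {n : ℕ} {u v : Fin (n + 2)} :
    (cycleGraph (n + 2)).Adj u v ↔ v = u + 1 ∨ u = v + 1 := by
  rw [cycleGraph_adj, sub_eq_iff_eq_add', sub_eq_iff_eq_add', or_comm]

end SimpleGraph

section Counting

variable {α : Type*} [Fintype α] [DecidableEq α]

theorem card_powersetCard_filter_mem_notMem {a b : α} (hab : a ≠ b) (k : ℕ) :
    #{W ∈ powersetCard (k + 1) univ | a ∈ W ∧ b ∉ W} = (Fintype.card α - 2).choose k := by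
  have hcard : #(univ \ {a, b} : Finset α) = Fintype.card α - 2 := by
    rw [card_sdiff_of_subset (subset_univ _), card_pair hab, card_univ]
  rw [← hcard, ← card_powersetCard]
  refine card_nbij' (·.erase a) (insert a) ?_ ?_ ?_ ?_
  · intro W hW
    simp only [mem_coe, mem_filter, mem_powersetCard] at hW ⊢
    obtain ⟨⟨-, hcard⟩, ha, hb⟩ := hW
    refine ⟨fun x hx => ?_, by rw [card_erase_of_mem ha, hcard, Nat.add_sub_cancel]⟩
    simp only [mem_sdiff, mem_univ, mem_insert, mem_singleton, true_and, not_or]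
    exact ⟨ne_of_mem_erase hx, fun h => hb (h ▸ mem_of_mem_erase hx)⟩
  · intro W hW
    simp only [mem_coe, mem_filter, mem_powersetCard] at hW ⊢
    obtain ⟨hsub, hcard⟩ := hW
    have ha : a ∉ W := fun ha => by simpa using hsub ha
    have hb : b ∉ W := fun hb => by simpa using hsub hb
    refine ⟨⟨subset_univ _, by rw [card_insert_of_notMem ha, hcard]⟩, mem_insert_self a W, ?_⟩
    simpa [mem_insert, hab.symm] using hb
  · intro W hW
    simp only [mem_coe, mem_filter] at hW
    exact insert_erase hW.2.1
  · intro W hW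
    simp only [mem_coe, mem_powersetCard] at hW
    exact erase_insert fun ha => by simpa using hW.1 ha

theorem sum_card_filter_mem_apply_notMem (s : α → α) (hs : ∀ x, s x ≠ x) (k : ℕ) :
    ∑ W ∈ powersetCard (k + 1) univ, #{x | x ∈ W ∧ s x ∉ W} =
      Fintype.card α * (Fintype.card α - 2).choose k := by
  have hswap := sum_card_bipartiteAbove_eq_sum_card_bipartiteBelow
    (s := powersetCard (k + 1) univ) (t := univ) (r := fun W x => x ∈ W ∧ s x ∉ W)
  simp only [bipartiteAbove, bipartiteBelow] at hswap
  rw [hswap, sum_congr rfl fun x _ => card_powersetCard_filter_mem_notMem (hs x).symm k]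
  simp

end Counting

theorem Nat.cast_mul_choose_sub_choose_eq {n k : ℕ} (hk : 1 ≤ k) (hkn : k < n) :
    (n : ℚ) * ((n - 2).choose (k - 1) : ℕ) - (n.choose k : ℕ) =
      n * (k - 1) / (n - k) * ((n - 2).choose k : ℕ) := by
  obtain ⟨j, rfl⟩ : ∃ j, k = j + 1 := ⟨k - 1, by omega⟩
  obtain ⟨d, rfl⟩ : ∃ d, n = j + d + 2 := ⟨n - j - 2, by omega⟩
  rw [show j + d + 2 - 2 = j + d by omega, Nat.add_sub_cancel]
  have hw : ((j + d).choose (j + 1) : ℚ) = (j + d).choose j * d / (j + 1) := by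
    rw [eq_div_iff (by positivity)]
    exact_mod_cast (choose_succ_right_eq (j + d) j).trans (by rw [Nat.add_sub_cancel_left])
  have hy : ((j + d + 1).choose j : ℚ) = (j + d).choose j * (j + d + 1) / (d + 1) := by
    rw [eq_div_iff (by positivity)]
    exact_mod_cast ((choose_mul_succ_eq (j + d) j).trans (by congr 1; omega)).symm
  have hz : ((j + d + 2).choose (j + 1) : ℚ) = (j + d + 2) * (j + d + 1).choose j / (j + 1) := by
    rw [eq_div_iff (by positivity)]
    exact_mod_cast (add_one_mul_choose_eq (j + d + 1) j).symm
  rw [hz, hy, hw]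
  push_cast
  rw [show (j + d + 2 : ℚ) - (j + 1) = d + 1 by ring]
  field_simp
  ring

open Fin.NatCast in
theorem exists_iterate_add_one_notMem {n : ℕ} [NeZero n] {W : Finset (Fin n)} (hW : W ≠ univ)
    (x : Fin n) : ∃ m, (· + 1)^[m] x ∉ W := by
  obtain ⟨g, hg⟩ := by simpa [eq_univ_iff_forall] using hW
  refine ⟨(g - x).val, ?_⟩
  simpa [add_right_iterate_apply] using hg

theorem card_connectedComponent_induce_cycleGraph {n : ℕ} {W : Finset (Fin (n + 2))}
    (hW : W ≠ univ) :
    Nat.card ((SimpleGraph.cycleGraph (n + 2)).induce (W : Set (Fin (n + 2)))).ConnectedComponent =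
      #{x | x ∈ W ∧ x + 1 ∉ W} := by
  rw [SimpleGraph.card_connectedComponent_induce_eq (s := (· + 1))
    (fun _ _ => SimpleGraph.cycleGraph_adj_iff_eq_add_one) (exists_iterate_add_one_notMem hW)]
  simp [Nat.card_eq_fintype_card, Fintype.card_subtype]

theorem graphB_eq_graphC_sub {V : Type} [Fintype V] [DecidableEq V] (k : ℕ)
    (G : SimpleGraph V) : graphB k G = graphC k G - (Fintype.card V).choose k := by
  simp [graphB, graphC, sum_sub_distrib, card_powersetCard]

theorem graphC_card_of_connected {V : Type} [Fintype V] [DecidableEq V] {G : SimpleGraph V}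
    (hG : G.Connected) : graphC (Fintype.card V) G = 1 := by
  rw [graphC, ← card_univ, powersetCard_self, sum_singleton, coe_univ,
    Nat.card_congr G.induceUnivIso.connectedComponentEquiv, hG.card_connectedComponent]

theorem graphC_cycleGraph {n k : ℕ} (hk : 1 ≤ k) (hkn : k < n) :
    graphC k (SimpleGraph.cycleGraph n) = n * (n - 2).choose (k - 1) := by
  obtain ⟨m, rfl⟩ : ∃ m, n = m + 2 := ⟨n - 2, by omega⟩
  obtain ⟨j, rfl⟩ : ∃ j, k = j + 1 := ⟨k - 1, by omega⟩
  calc graphC (j + 1) (SimpleGraph.cycleGraph (m + 2))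
      = ∑ W ∈ powersetCard (j + 1) (univ : Finset (Fin (m + 2))), #{x | x ∈ W ∧ x + 1 ∉ W} := by
        refine sum_congr rfl fun W hW => card_connectedComponent_induce_cycleGraph ?_
        rintro rfl
        rw [mem_powersetCard, card_univ, Fintype.card_fin] at hW
        omega
    _ = (m + 2) * m.choose j := by
        rw [sum_card_filter_mem_apply_notMem (· + 1) (fun x => by simp) j]
        simp

/-- for the cycle graph on `n ≥ 3` vertices, `b_n = 0` and for `1 ≤ k < n`,
`b_k = (n(k-1)/(n-k))·C(n-2,k)`. -/
theorem bk_cycleGraph (n : ℕ) (hn : 3 ≤ n) :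
    graphB n (SimpleGraph.cycleGraph n) = 0 ∧
    ∀ k, 1 ≤ k → k < n →
      (graphB k (SimpleGraph.cycleGraph n) : ℚ) =
        (n : ℚ) * ((k : ℚ) - 1) / ((n : ℚ) - (k : ℚ)) * ((n - 2).choose k) := by
  refine ⟨?_, fun k hk hkn => ?_⟩
  · obtain ⟨m, rfl⟩ : ∃ m, n = m + 1 := ⟨n - 1, by omega⟩
    have hC := graphC_card_of_connected (SimpleGraph.cycleGraph_connected (n := m))
    rw [Fintype.card_fin] at hC
    rw [graphB_eq_graphC_sub, hC, Fintype.card_fin, Nat.choose_self, Nat.cast_one, sub_self]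
  · rw [graphB_eq_graphC_sub, graphC_cycleGraph hk hkn, Fintype.card_fin]
    push_cast
    exact Nat.cast_mul_choose_sub_choose_eq hk hkn
end
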